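/- arXiv:math/0605710 — 2 statements merged into one kernel-verified Lean document; each statement's English description precedes it below -/
import Mathlib

section
/- Let Q be a positive definite quadratic form on a finite-dimensional real vector space V and let e₁, e₂ ∈ V satisfy Q(e₁) = Q(e₂) = 1 and polar(Q)(e₁, e₂) = 0. For f ∈ ℝ set u = (1 + f²)^{-1/2}·(1 + f·ι(e₁)ι(e₂)) in Cl(Q). Then u is a unit lying in the Spin group of Q, and conjugation by u rotates the plane spanned by e₁, e₂: u·ι(e₁)·u^{-1} = ι(((1 − f²)e₁ − 2f e₂)/(1 + f²)), u·ι(e₂)·u^{-1} = ι((2f e₁ + (1 − f²)e₂)/(1 + f²)), and u·ι(v)·u^{-1} = ι(v) for every v ∈ V with polar(Q)(v, e₁) = polar(Q)(v, e₂) = 0. -/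
open CliffordAlgebra

noncomputable section

/-- Let `Q` be a positive definite quadratic form on a finite-dimensional real
vector space `V` and `e₁, e₂ ∈ V` orthonormal (`Q e₁ = Q e₂ = 1`, `polar Q e₁ e₂ = 0`).  For
`f ∈ ℝ`, the element `u = (1 + f²)^(-1/2) · (1 + f·ι e₁ ι e₂)` of the Clifford algebra is a
unit lying in the Spin group of `Q`, and conjugation by it rotates the plane spanned by
`e₁, e₂`: `u (ι e₁) u⁻¹ = ι(((1 − f²)e₁ − 2f e₂)/(1 + f²))`,
`u (ι e₂) u⁻¹ = ι((2f e₁ + (1 − f²)e₂)/(1 + f²))`, and `u (ι v) u⁻¹ = ι v` for `v` orthogonal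
to `e₁` and `e₂`. -/
theorem spin_rotation {V : Type*} [AddCommGroup V] [Module ℝ V] [FiniteDimensional ℝ V]
    (Q : QuadraticForm ℝ V) (hQ : Q.PosDef)
    (e₁ e₂ : V) (h1 : Q e₁ = 1) (h2 : Q e₂ = 1)
    (h12 : QuadraticMap.polar Q e₁ e₂ = 0) (f : ℝ) :
    let u : CliffordAlgebra Q := (Real.sqrt (1 + f ^ 2))⁻¹ • (1 + f • (ι Q e₁ * ι Q e₂))
    IsUnit u ∧ u ∈ spinGroup Q ∧
    u * ι Q e₁ * Ring.inverse u = ι Q ((1 + f ^ 2)⁻¹ • ((1 - f ^ 2) • e₁ - (2 * f) • e₂)) ∧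
    u * ι Q e₂ * Ring.inverse u = ι Q ((1 + f ^ 2)⁻¹ • ((2 * f) • e₁ + (1 - f ^ 2) • e₂)) ∧
    ∀ v : V, QuadraticMap.polar Q v e₁ = 0 → QuadraticMap.polar Q v e₂ = 0 →
      u * ι Q v * Ring.inverse u = ι Q v := by
  intro u
  have hpos : (0:ℝ) < 1 + f ^ 2 := by positivity
  set c : ℝ := (Real.sqrt (1 + f ^ 2))⁻¹ with hc
  have hcc : c * c * (1 + f ^ 2) = 1 := by
    rw [hc, ← mul_inv, Real.mul_self_sqrt hpos.le]
    exact inv_mul_cancel₀ hpos.ne'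
  have hcinv : c * c = (1 + f ^ 2)⁻¹ := eq_inv_of_mul_eq_one_left hcc
  set a := ι Q e₁ with ha
  set b := ι Q e₂ with hb
  have haa : a * a = 1 := by rw [ha, ι_sq_scalar, h1, map_one]
  have hbb : b * b = 1 := by rw [hb, ι_sq_scalar, h2, map_one]
  have hba : b * a = -(a * b) := by
    have h := ι_mul_ι_add_swap (Q := Q) e₁ e₂
    rw [h12, map_zero, ← ha, ← hb] at h
    exact eq_neg_of_add_eq_zero_right h
  have swp : ∀ x : CliffordAlgebra Q, b * (a * x) = -(a * (b * x)) := fun x => by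
    rw [← mul_assoc, hba, neg_mul, mul_assoc]
  have aa : ∀ x : CliffordAlgebra Q, a * (a * x) = x := fun x => by
    rw [← mul_assoc, haa, one_mul]
  have bb : ∀ x : CliffordAlgebra Q, b * (b * x) = x := fun x => by
    rw [← mul_assoc, hbb, one_mul]
  have hmul : (1 + f • (a * b)) * (1 - f • (a * b)) = (1 + f ^ 2) • 1 := by
    simp only [mul_add, add_mul, mul_sub, sub_mul, smul_mul_assoc, mul_smul_comm, mul_one,
      one_mul, mul_assoc, swp, aa, bb, hba, haa, hbb, smul_smul, smul_neg, neg_smul, mul_neg,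
      neg_mul, neg_neg]
    module
  have hmul' : (1 - f • (a * b)) * (1 + f • (a * b)) = (1 + f ^ 2) • 1 := by
    simp only [mul_add, add_mul, mul_sub, sub_mul, smul_mul_assoc, mul_smul_comm, mul_one,
      one_mul, mul_assoc, swp, aa, bb, hba, haa, hbb, smul_smul, smul_neg, neg_smul, mul_neg,
      neg_mul, neg_neg]
    module
  set w : CliffordAlgebra Q := c • (1 - f • (a * b)) with hw
  have huw : u * w = 1 := by
    show (c • (1 + f • (a * b))) * (c • (1 - f • (a * b))) = 1
    rw [smul_mul_smul_comm, hmul, smul_smul, hcc, one_smul]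
  have hwu : w * u = 1 := by
    show (c • (1 - f • (a * b))) * (c • (1 + f • (a * b))) = 1
    rw [smul_mul_smul_comm, hmul', smul_smul, hcc, one_smul]
  have hU : IsUnit u := ⟨⟨u, w, huw, hwu⟩, rfl⟩
  have hinv : Ring.inverse u = w := by
    have := Ring.inverse_unit (⟨u, w, huw, hwu⟩ : (CliffordAlgebra Q)ˣ)
    simpa using this
  set b' : V := c • (e₁ + f • e₂) with hb'
  have hQadd : Q (e₁ + f • e₂) = 1 + f ^ 2 := by
    have hp : QuadraticMap.polar Q e₁ (f • e₂) = 0 := by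
      rw [QuadraticMap.polar_smul_right, h12, smul_zero]
    rw [QuadraticMap.polar] at hp
    have h3 : Q (f • e₂) = f ^ 2 := by
      rw [QuadraticMap.map_smul, h2, smul_eq_mul, mul_one, sq]
    rw [h1, h3] at hp
    linarith
  have hQb' : Q b' = 1 := by
    rw [hb', QuadraticMap.map_smul, hQadd, smul_eq_mul]
    exact hcc
  have hub' : u = a * ι Q b' := by
    show c • (1 + f • (a * b)) = _
    rw [hb', map_smul, map_add, map_smul, mul_smul_comm, mul_add, mul_smul_comm, ← ha, ← hb,
      haa]
  have hb'b' : ι Q b' * ι Q b' = 1 := by rw [ι_sq_scalar, hQb', map_one]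
  have hspin : u ∈ spinGroup Q := by
    rw [spinGroup.mem_iff]
    refine ⟨pinGroup.mem_iff.mpr ⟨?_, ?_⟩, ?_⟩
    · refine ⟨⟨a, a, haa, haa⟩ * ⟨ι Q b', ι Q b', hb'b', hb'b'⟩, ?_, ?_⟩
      · exact Subgroup.mul_mem _ (Subgroup.subset_closure ⟨e₁, rfl⟩)
          (Subgroup.subset_closure ⟨b', rfl⟩)
      · simpa using hub'.symm
    · have hstar : star u = w := by
        show star (c • (1 + f • (a * b))) = w
        rw [CliffordAlgebra.star_smul, star_add, star_one, CliffordAlgebra.star_smul, star_mul,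
          ha, hb, star_ι, star_ι, neg_mul_neg, hba, hw, smul_neg, ← sub_eq_add_neg]
      rw [Unitary.mem_iff, hstar]
      exact ⟨hwu, huw⟩
    · rw [hub']
      exact ι_mul_ι_mem_evenOdd_zero Q e₁ b'
  have hconj1 : (1 + f • (a * b)) * a * (1 - f • (a * b)) = (1 - f ^ 2) • a - (2 * f) • b := by
    simp only [mul_add, add_mul, mul_sub, sub_mul, smul_mul_assoc, mul_smul_comm, mul_one,
      one_mul, mul_assoc, swp, aa, bb, hba, haa, hbb, smul_smul, smul_neg, neg_smul, mul_neg,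
      neg_mul, neg_neg]
    module
  have hconj2 : (1 + f • (a * b)) * b * (1 - f • (a * b)) = (2 * f) • a + (1 - f ^ 2) • b := by
    simp only [mul_add, add_mul, mul_sub, sub_mul, smul_mul_assoc, mul_smul_comm, mul_one,
      one_mul, mul_assoc, swp, aa, bb, hba, haa, hbb, smul_smul, smul_neg, neg_smul, mul_neg,
      neg_mul, neg_neg]
    module
  refine ⟨hU, hspin, ?_, ?_, ?_⟩
  · rw [hinv]
    show (c • (1 + f • (a * b))) * a * w = _
    rw [hw, smul_mul_assoc, smul_mul_smul_comm, hconj1, hcinv]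
    rw [map_smul, map_sub, map_smul, map_smul, ← ha, ← hb]
  · rw [hinv]
    show (c • (1 + f • (a * b))) * b * w = _
    rw [hw, smul_mul_assoc, smul_mul_smul_comm, hconj2, hcinv]
    rw [map_smul, map_add, map_smul, map_smul, ← ha, ← hb]
  · intro v hv1 hv2
    set x := ι Q v with hx
    have hax : a * x = -(x * a) := by
      have h := ι_mul_ι_add_swap (Q := Q) v e₁
      rw [hv1, map_zero, ← ha, ← hx] at h
      exact eq_neg_of_add_eq_zero_right h
    have hbx : b * x = -(x * b) := by
      have h := ι_mul_ι_add_swap (Q := Q) v e₂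
      rw [hv2, map_zero, ← hb, ← hx] at h
      exact eq_neg_of_add_eq_zero_right h
    have hcomm : a * b * x = x * (a * b) := by
      rw [mul_assoc, hbx, mul_neg, ← mul_assoc, hax, neg_mul, neg_neg, mul_assoc]
    have hxcomm : (1 + f • (a * b)) * x = x * (1 + f • (a * b)) := by
      rw [add_mul, mul_add, one_mul, mul_one, smul_mul_assoc, mul_smul_comm, hcomm]
    rw [hinv]
    show (c • (1 + f • (a * b))) * x * w = x
    rw [hw, smul_mul_assoc, smul_mul_smul_comm, hxcomm, mul_assoc, hmul, mul_smul_comm,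
      mul_one, smul_smul, hcc, one_smul]
end
end

section
/- Let G be a real symmetric positive definite k×k matrix and A a real antisymmetric k×k matrix. Then det(G + A) = det(G − A), and det(G + A) ≥ det(G) > 0. -/
/-!
Writing `G = Bᵀ B` with `B` invertible, `G + A = Bᵀ (1 + M) B` with `M = B⁻ᵀ A B⁻¹` again
antisymmetric, so it suffices to show `1 ≤ det (1 + M)`. Since `(1 + M)(1 + M)ᵀ = 1 + M Mᵀ` and
`M Mᵀ` is positive semidefinite, `det (1 + M) ^ 2 = det (1 + M Mᵀ) ≥ 1`; the sign is fixed by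
deforming `M` to `0` through the antisymmetric matrices `t • M`, along which the determinant
never vanishes.
-/

open Matrix

namespace Matrix

variable {n : Type*} [Fintype n] [DecidableEq n]

lemma det_add_eq_det_sub_of_antisymm {R : Type*} [CommRing R] {G A : Matrix n n R}
    (hG : G.IsSymm) (hA : Aᵀ = -A) : (G + A).det = (G - A).det := by
  rw [← det_transpose, transpose_add, hG.eq, hA, sub_eq_add_neg]

lemma sq_det_one_add_of_antisymm {R : Type*} [CommRing R] {M : Matrix n n R} (hM : Mᵀ = -M) :
    (1 + M).det ^ 2 = (1 + M * Mᵀ).det := by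
  have : (1 + M) * (1 + M)ᵀ = 1 + M * Mᵀ := by
    rw [transpose_add, transpose_one, hM]
    noncomm_ring
  rw [← this, det_mul, det_transpose, sq]

lemma PosSemidef.one_le_det_one_add {Q : Matrix n n ℝ} (hQ : Q.PosSemidef) :
    1 ≤ (1 + Q).det := by
  set U : Matrix n n ℝ := (hQ.1.eigenvectorUnitary : Matrix n n ℝ)
  have hU : U ∈ unitary _ := SetLike.coe_mem _
  have hconj : 1 + Q = U * diagonal (fun i => 1 + hQ.1.eigenvalues i) * star U := by
    rw [← diagonal_one, ← diagonal_add, mul_add, add_mul, diagonal_one, mul_one,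
      Unitary.mul_star_self_of_mem hU]
    conv_lhs => rw [hQ.1.spectral_theorem, Unitary.conjStarAlgAut_apply]
    rfl
  rw [hconj, det_mul_comm, ← mul_assoc, Unitary.star_mul_self_of_mem hU, one_mul, det_diagonal]
  exact Finset.one_le_prod fun i _ => le_add_of_nonneg_right (hQ.eigenvalues_nonneg i)

lemma one_le_sq_det_one_add_of_antisymm {M : Matrix n n ℝ} (hM : Mᵀ = -M) :
    1 ≤ (1 + M).det ^ 2 := by
  rw [sq_det_one_add_of_antisymm hM]
  exact PosSemidef.one_le_det_one_add (by simpa using posSemidef_self_mul_conjTranspose M)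

lemma one_le_det_one_add_of_antisymm {M : Matrix n n ℝ} (hM : Mᵀ = -M) :
    1 ≤ (1 + M).det := by
  set f : ℝ → ℝ := fun t => (1 + t • M).det
  have hf : ∀ t, 1 ≤ f t ^ 2 := fun t =>
    one_le_sq_det_one_add_of_antisymm (by rw [transpose_smul, hM, smul_neg])
  have hpos : 0 < f 1 := by
    by_contra! h
    obtain ⟨t, -, ht⟩ := intermediate_value_Icc' zero_le_one
      (by fun_prop : Continuous f).continuousOn ⟨h, by simp [f]⟩
    have := hf t
    rw [ht] at this
    norm_num at this
  have := hf 1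
  simp only [f, one_smul] at hpos this
  nlinarith

open scoped MatrixOrder in
lemma PosDef.det_le_det_add_of_antisymm {G A : Matrix n n ℝ} (hG : G.PosDef) (hA : Aᵀ = -A) :
    G.det ≤ (G + A).det := by
  obtain ⟨B, hB, rfl⟩ := CStarAlgebra.isStrictlyPositive_iff_eq_star_mul_self.mp
    hG.isStrictlyPositive
  rw [star_eq_conjTranspose, conjTranspose_eq_transpose_of_trivial]
  have hB' : IsUnit B.det := (isUnit_iff_isUnit_det B).mp hB
  set M := (B⁻¹)ᵀ * A * B⁻¹
  have hM : Mᵀ = -M := by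
    simp only [M, transpose_mul, transpose_transpose, hA]
    noncomm_ring
  have hBMB : Bᵀ * M * B = A := by
    rw [mul_assoc, mul_assoc, nonsing_inv_mul _ hB', mul_one, ← mul_assoc, ← transpose_mul,
      nonsing_inv_mul _ hB', transpose_one, one_mul]
  have hdecomp : Bᵀ * B + A = Bᵀ * (1 + M) * B := by
    rw [mul_add, add_mul, mul_one, hBMB]
  rw [hdecomp, det_mul, det_mul, det_mul, det_transpose]
  nlinarith [one_le_det_one_add_of_antisymm hM, mul_self_nonneg B.det]

end Matrix

/-- For a real symmetric positive definite `k × k` matrix `G` and a real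
antisymmetric `k × k` matrix `A`, one has `det (G + A) = det (G - A)` and
`det (G + A) ≥ det G > 0`. -/
theorem det_posDef_add_antisymm (k : ℕ) (G A : Matrix (Fin k) (Fin k) ℝ)
    (hG : G.PosDef) (hA : Aᵀ = -A) :
    (G + A).det = (G - A).det ∧ G.det ≤ (G + A).det ∧ 0 < G.det :=
  ⟨det_add_eq_det_sub_of_antisymm (isHermitian_iff_isSymm.mp hG.isHermitian) hA,
    hG.det_le_det_add_of_antisymm hA, hG.det_pos⟩
end
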